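/- arXiv:1805.07682 — 7 statements merged into one kernel-verified Lean document; each statement's English description precedes it below -/
import Mathlib

section
/- For any y ∈ ℝⁿ, X ∈ ℝ^{n×p}, D ∈ ℝ^{m×p} and λ ≥ 0, every solution of the generalized lasso problem gives rise to the same fitted value: if β⁽¹⁾ and β⁽²⁾ are both global minimizers of f(β) = (1/2)‖y − Xβ‖₂² + λ‖Dβ‖₁, then X β⁽¹⁾ = X β⁽²⁾. -/
open Matrix

/-- The generalized lasso criterion `f(β) = (1/2)‖y − Xβ‖₂² + λ‖Dβ‖₁`. -/
noncomputable def glCrit (n p m : ℕ) (y : Fin n → ℝ) (X : Matrix (Fin n) (Fin p) ℝ)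
    (D : Matrix (Fin m) (Fin p) ℝ) (lam : ℝ) (β : Fin p → ℝ) : ℝ :=
  (1 / 2) * ∑ i, (y i - X.mulVec β i) ^ 2 + lam * ∑ i, |D.mulVec β i|

/-- A solution of the generalized lasso problem: a global minimizer. -/
def IsGLSol (n p m : ℕ) (y : Fin n → ℝ) (X : Matrix (Fin n) (Fin p) ℝ)
    (D : Matrix (Fin m) (Fin p) ℝ) (lam : ℝ) (β : Fin p → ℝ) : Prop :=
  ∀ β' : Fin p → ℝ, glCrit n p m y X D lam β ≤ glCrit n p m y X D lam β'

theorem generalized_lasso_unique_fit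
    (n p m : ℕ) (y : Fin n → ℝ) (X : Matrix (Fin n) (Fin p) ℝ)
    (D : Matrix (Fin m) (Fin p) ℝ) (lam : ℝ) (hlam : 0 ≤ lam)
    (β₁ β₂ : Fin p → ℝ) (h₁ : IsGLSol n p m y X D lam β₁)
    (h₂ : IsGLSol n p m y X D lam β₂) :
    X.mulVec β₁ = X.mulVec β₂ := by
  set a := X.mulVec β₁ with ha
  set b := X.mulVec β₂ with hb
  set mid : Fin p → ℝ := (1/2 : ℝ) • (β₁ + β₂) with hmid
  have hXm : X.mulVec mid = (1/2 : ℝ) • (a + b) := by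
    rw [hmid, Matrix.mulVec_smul, Matrix.mulVec_add]
  have hDm : D.mulVec mid = (1/2 : ℝ) • (D.mulVec β₁ + D.mulVec β₂) := by
    rw [hmid, Matrix.mulVec_smul, Matrix.mulVec_add]
  -- quadratic part identity
  have hquad : ∑ i, (y i - X.mulVec mid i) ^ 2 =
      (∑ i, (y i - a i) ^ 2) / 2 + (∑ i, (y i - b i) ^ 2) / 2
        - ∑ i, (a i - b i) ^ 2 / 4 := by
    rw [hXm]
    have e : ∀ i, (y i - ((1/2:ℝ) • (a + b)) i) ^ 2 =
        (y i - a i) ^ 2 / 2 + (y i - b i) ^ 2 / 2 - (a i - b i) ^ 2 / 4 := by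
      intro i; simp only [Pi.smul_apply, Pi.add_apply, smul_eq_mul]; ring
    simp only [e]
    rw [Finset.sum_sub_distrib, Finset.sum_add_distrib, ← Finset.sum_div, ← Finset.sum_div]
  -- penalty part bound
  have habs : ∑ i, |D.mulVec mid i| ≤
      (∑ i, |D.mulVec β₁ i|) / 2 + (∑ i, |D.mulVec β₂ i|) / 2 := by
    rw [hDm]
    have e : ∀ i, |((1/2:ℝ) • (D.mulVec β₁ + D.mulVec β₂)) i| ≤
        |D.mulVec β₁ i| / 2 + |D.mulVec β₂ i| / 2 := by
      intro i
      simp only [Pi.smul_apply, Pi.add_apply, smul_eq_mul, abs_mul]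
      rw [abs_of_pos (by norm_num : (0:ℝ) < 1/2)]
      have := abs_add_le (D.mulVec β₁ i) (D.mulVec β₂ i)
      have h1 := abs_nonneg (D.mulVec β₁ i)
      linarith
    calc ∑ i, |((1/2:ℝ) • (D.mulVec β₁ + D.mulVec β₂)) i|
        ≤ ∑ i, (|D.mulVec β₁ i| / 2 + |D.mulVec β₂ i| / 2) :=
          Finset.sum_le_sum (fun i _ => e i)
      _ = (∑ i, |D.mulVec β₁ i|) / 2 + (∑ i, |D.mulVec β₂ i|) / 2 := by
          rw [Finset.sum_add_distrib, ← Finset.sum_div, ← Finset.sum_div]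
  have hc : glCrit n p m y X D lam β₁ = glCrit n p m y X D lam β₂ :=
    le_antisymm (h₁ β₂) (h₂ β₁)
  have h1m := h₁ mid
  have hkey : ∑ i, (a i - b i) ^ 2 / 4 ≤ 0 := by
    have hpen := mul_le_mul_of_nonneg_left habs hlam
    simp only [glCrit] at h1m hc
    rw [hquad] at h1m
    simp only [← ha, ← hb] at h1m hc
    nlinarith [hpen]
  have hall : ∀ i, (a i - b i) ^ 2 / 4 = 0 := by
    intro i
    have := Finset.sum_nonneg (fun i (_ : i ∈ Finset.univ) =>
      div_nonneg (sq_nonneg (a i - b i)) (by norm_num : (0:ℝ) ≤ 4))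
    have hz : ∑ i, (a i - b i) ^ 2 / 4 = 0 := le_antisymm hkey this
    have := (Finset.sum_eq_zero_iff_of_nonneg (fun i _ =>
      div_nonneg (sq_nonneg (a i - b i)) (by norm_num : (0:ℝ) ≤ 4))).mp hz
    exact this i (Finset.mem_univ i)
  funext i
  have := hall i
  have h0 : (a i - b i) ^ 2 = 0 := by linarith
  have := pow_eq_zero_iff (n := 2) (by norm_num) |>.mp h0
  linarith [this]
end

section
/- For any y ∈ ℝⁿ, X ∈ ℝ^{n×p}, D ∈ ℝ^{m×p} and λ > 0, every solution of the generalized lasso problem gives rise to the same penalty value: if β⁽¹⁾ and β⁽²⁾ are both global minimizers of f(β) = (1/2)‖y − Xβ‖₂² + λ‖Dβ‖₁, then ‖D β⁽¹⁾‖₁ = ‖D β⁽²⁾‖₁. -/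
open Matrix

theorem generalized_lasso_unique_penalty_value
    (n p m : ℕ) (y : Fin n → ℝ) (X : Matrix (Fin n) (Fin p) ℝ)
    (D : Matrix (Fin m) (Fin p) ℝ) (lam : ℝ) (hlam : 0 < lam)
    (β₁ β₂ : Fin p → ℝ) (h₁ : IsGLSol n p m y X D lam β₁)
    (h₂ : IsGLSol n p m y X D lam β₂) :
    ∑ i, |D.mulVec β₁ i| = ∑ i, |D.mulVec β₂ i| := by
  set μ : Fin p → ℝ := (2:ℝ)⁻¹ • (β₁ + β₂) with hμ
  have hXμ : ∀ i, X.mulVec μ i = (X.mulVec β₁ i + X.mulVec β₂ i) / 2 := by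
    intro i
    have : X.mulVec μ = (2:ℝ)⁻¹ • (X.mulVec β₁ + X.mulVec β₂) := by
      rw [hμ, Matrix.mulVec_smul, Matrix.mulVec_add]
    rw [this]; simp [Pi.smul_apply]; ring
  have hDμ : ∀ i, D.mulVec μ i = (D.mulVec β₁ i + D.mulVec β₂ i) / 2 := by
    intro i
    have : D.mulVec μ = (2:ℝ)⁻¹ • (D.mulVec β₁ + D.mulVec β₂) := by
      rw [hμ, Matrix.mulVec_smul, Matrix.mulVec_add]
    rw [this]; simp [Pi.smul_apply]; ring
  set A := ∑ i, (y i - X.mulVec β₁ i) ^ 2 with hA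
  set B := ∑ i, (y i - X.mulVec β₂ i) ^ 2 with hB
  set P₁ := ∑ i, |D.mulVec β₁ i| with hP1
  set P₂ := ∑ i, |D.mulVec β₂ i| with hP2
  set S := ∑ i, (X.mulVec β₁ i - X.mulVec β₂ i) ^ 2 with hS
  have e12 : (1/2) * A + lam * P₁ = (1/2) * B + lam * P₂ :=
    le_antisymm (h₁ β₂) (h₂ β₁)
  have hq : ∑ i, (y i - X.mulVec μ i) ^ 2 = A / 2 + B / 2 - S / 4 := by
    have : ∑ i, (y i - X.mulVec μ i) ^ 2
        = ∑ i, ((y i - X.mulVec β₁ i) ^ 2 / 2 + (y i - X.mulVec β₂ i) ^ 2 / 2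
            - (X.mulVec β₁ i - X.mulVec β₂ i) ^ 2 / 4) :=
      Finset.sum_congr rfl (fun i _ => by rw [hXμ i]; ring)
    rw [this]
    rw [Finset.sum_sub_distrib, Finset.sum_add_distrib, ← Finset.sum_div, ← Finset.sum_div,
      ← Finset.sum_div]
  have hp : ∑ i, |D.mulVec μ i| ≤ P₁ / 2 + P₂ / 2 := by
    have : ∑ i, |D.mulVec μ i| ≤ ∑ i, (|D.mulVec β₁ i| / 2 + |D.mulVec β₂ i| / 2) := by
      apply Finset.sum_le_sum
      intro i _
      rw [hDμ i]
      calc |(D.mulVec β₁ i + D.mulVec β₂ i) / 2|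
          ≤ (|D.mulVec β₁ i| + |D.mulVec β₂ i|) / 2 := by
            rw [abs_div]; simp only [abs_two]
            exact div_le_div_of_nonneg_right (abs_add_le _ _) (by norm_num)
        _ = |D.mulVec β₁ i| / 2 + |D.mulVec β₂ i| / 2 := by ring
    calc ∑ i, |D.mulVec μ i| ≤ _ := this
      _ = P₁ / 2 + P₂ / 2 := by
        rw [Finset.sum_add_distrib, ← Finset.sum_div, ← Finset.sum_div]
  have hmin : (1/2) * A + lam * P₁ ≤ (1/2) * (A / 2 + B / 2 - S / 4)
      + lam * (P₁ / 2 + P₂ / 2) := by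
    have := h₁ μ
    unfold glCrit at this
    rw [hq] at this
    have h2 : lam * (∑ i, |D.mulVec μ i|) ≤ lam * (P₁ / 2 + P₂ / 2) :=
      mul_le_mul_of_nonneg_left hp hlam.le
    linarith
  have hSle : S ≤ 0 := by nlinarith [e12, hmin]
  have hSge : 0 ≤ S := Finset.sum_nonneg (fun i _ => sq_nonneg _)
  have hS0 : S = 0 := le_antisymm hSle hSge
  have heq : ∀ i, X.mulVec β₁ i = X.mulVec β₂ i := by
    intro i
    have := (Finset.sum_eq_zero_iff_of_nonneg (fun i _ => sq_nonneg _)).mp hS0 i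
      (Finset.mem_univ i)
    have := pow_eq_zero_iff (n := 2) (by norm_num) |>.mp this
    linarith [sub_eq_zero.mp this]
  have hAB : A = B := Finset.sum_congr rfl (fun i _ => by rw [heq i])
  have : lam * P₁ = lam * P₂ := by linarith
  exact mul_left_cancel₀ hlam.ne' this
end

section
/- For any y ∈ ℝⁿ, X ∈ ℝ^{n×p}, D ∈ ℝ^{m×p} and λ > 0: (i) every optimal subgradient γ̂ of the generalized lasso problem gives rise to the same value of Dᵀγ̂, i.e., if γ̂⁽¹⁾ and γ̂⁽²⁾ are both optimal subgradients then Dᵀγ̂⁽¹⁾ = Dᵀγ̂⁽²⁾; and (ii) if D has full row rank (rank(D) = m), then the optimal subgradient is itself unique. -/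
/-!
If `(β, γ)` and `(β', γ')` both satisfy the KKT conditions, subtracting the stationarity equations
gives `XᵀX(β - β') = -λDᵀ(γ - γ')`. Pairing with `β - β'` yields
`‖X(β - β')‖² = -λ⟨γ - γ', Dβ - Dβ'⟩ ≤ 0` by monotonicity of the `ℓ¹` subdifferential, so
`Xβ = Xβ'`, and stationarity then forces `Dᵀγ = Dᵀγ'`. Full row rank makes `Dᵀ` injective.
-/

open Matrix

/-- `γ̂` is an optimal subgradient: together with some solution `β̂` it satisfies
the KKT conditions `Xᵀ(y − Xβ̂) = λ Dᵀ γ̂`, with `γ̂ᵢ = sign((Dβ̂)ᵢ)` when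
`(Dβ̂)ᵢ ≠ 0` and `γ̂ᵢ ∈ [−1,1]` when `(Dβ̂)ᵢ = 0`. -/
noncomputable def IsOptSubgrad (n p m : ℕ) (y : Fin n → ℝ) (X : Matrix (Fin n) (Fin p) ℝ)
    (D : Matrix (Fin m) (Fin p) ℝ) (lam : ℝ) (γ : Fin m → ℝ) : Prop :=
  ∃ β : Fin p → ℝ, IsGLSol n p m y X D lam β ∧
    X.transpose.mulVec (y - X.mulVec β) = lam • D.transpose.mulVec γ ∧
    ∀ i : Fin m,
      (D.mulVec β i ≠ 0 → γ i = Real.sign (D.mulVec β i)) ∧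
      (D.mulVec β i = 0 → γ i ∈ Set.Icc (-1 : ℝ) 1)

def IsL1Subgrad {ι : Type*} (γ v : ι → ℝ) : Prop :=
  ∀ i, (v i ≠ 0 → γ i = Real.sign (v i)) ∧ (v i = 0 → γ i ∈ Set.Icc (-1 : ℝ) 1)

namespace IsL1Subgrad

variable {ι : Type*} {γ v : ι → ℝ}

lemma abs_le_one (h : IsL1Subgrad γ v) (i : ι) : |γ i| ≤ 1 := by
  by_cases hv : v i = 0
  · exact abs_le.mpr ((h i).2 hv)
  · rw [(h i).1 hv]
    rcases Real.sign_apply_eq_of_ne_zero (v i) hv with hs | hs <;> simp [hs]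

lemma mul_self_eq_abs (h : IsL1Subgrad γ v) (i : ι) : γ i * v i = |v i| := by
  by_cases hv : v i = 0
  · simp [hv]
  · rw [(h i).1 hv]
    rcases lt_or_gt_of_ne hv with hneg | hpos
    · simp [Real.sign_of_neg hneg, abs_of_neg hneg]
    · simp [Real.sign_of_pos hpos, abs_of_pos hpos]

lemma mul_le_abs (h : IsL1Subgrad γ v) (i : ι) (x : ℝ) : γ i * x ≤ |x| :=
  calc γ i * x ≤ |γ i * x| := le_abs_self _
    _ = |γ i| * |x| := abs_mul _ _
    _ ≤ |x| := mul_le_of_le_one_left (abs_nonneg x) (h.abs_le_one i)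

/-- Monotonicity of the subdifferential of the `ℓ¹` norm. -/
lemma dotProduct_sub_nonneg [Fintype ι] {γ' v' : ι → ℝ} (h : IsL1Subgrad γ v)
    (h' : IsL1Subgrad γ' v') : 0 ≤ (γ - γ') ⬝ᵥ (v - v') := by
  refine Finset.sum_nonneg fun i _ => ?_
  have := h.mul_self_eq_abs i
  have := h'.mul_self_eq_abs i
  have := h.mul_le_abs i (v' i)
  have := h'.mul_le_abs i (v i)
  simp only [Pi.sub_apply]
  nlinarith

end IsL1Subgrad

lemma Matrix.mulVec_transpose_injective_of_rank_eq {R μ κ : Type*} [Field R] [Fintype μ]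
    [Fintype κ] {D : Matrix μ κ R} (hD : D.rank = Fintype.card μ) :
    Function.Injective Dᵀ.mulVec := by
  rw [Matrix.mulVec_injective_iff, Matrix.col_transpose,
    linearIndependent_iff_card_eq_finrank_span, Set.finrank, ← D.rank_eq_finrank_span_row, hD]

section KKT

variable {ι κ μ : Type*} [Fintype ι] [Fintype κ] [Fintype μ] {y : ι → ℝ} {X : Matrix ι κ ℝ}
  {D : Matrix μ κ ℝ} {lam : ℝ} {β β' : κ → ℝ} {γ γ' : μ → ℝ}

lemma mulVec_eq_of_kkt (hlam : 0 ≤ lam)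
    (hβ : Xᵀ *ᵥ (y - X *ᵥ β) = lam • Dᵀ *ᵥ γ) (hβ' : Xᵀ *ᵥ (y - X *ᵥ β') = lam • Dᵀ *ᵥ γ')
    (hγ : IsL1Subgrad γ (D *ᵥ β)) (hγ' : IsL1Subgrad γ' (D *ᵥ β')) :
    X *ᵥ β = X *ᵥ β' := by
  have hnormal : Xᵀ *ᵥ (X *ᵥ (β - β')) = -(lam • Dᵀ *ᵥ (γ - γ')) := by
    rw [mulVec_sub, mulVec_sub, mulVec_sub, smul_sub, ← hβ, ← hβ', mulVec_sub, mulVec_sub]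
    abel
  have hfit : (X *ᵥ (β - β')) ⬝ᵥ (X *ᵥ (β - β')) = -(lam * ((γ - γ') ⬝ᵥ (D *ᵥ β - D *ᵥ β'))) :=
    calc (X *ᵥ (β - β')) ⬝ᵥ (X *ᵥ (β - β')) = (β - β') ⬝ᵥ (Xᵀ *ᵥ (X *ᵥ (β - β'))) := by
          rw [dotProduct_mulVec (β - β'), vecMul_transpose]
      _ = -(lam * ((D *ᵥ (β - β')) ⬝ᵥ (γ - γ'))) := by
          rw [hnormal, dotProduct_neg, dotProduct_smul, dotProduct_mulVec, vecMul_transpose,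
            smul_eq_mul]
      _ = -(lam * ((γ - γ') ⬝ᵥ (D *ᵥ β - D *ᵥ β'))) := by rw [dotProduct_comm, mulVec_sub]
  have hmono : 0 ≤ lam * ((γ - γ') ⬝ᵥ (D *ᵥ β - D *ᵥ β')) :=
    mul_nonneg hlam (hγ.dotProduct_sub_nonneg hγ')
  have hzero : (X *ᵥ (β - β')) ⬝ᵥ (X *ᵥ (β - β')) = 0 :=
    le_antisymm (by linarith) (Finset.sum_nonneg fun i _ => mul_self_nonneg _)
  rwa [dotProduct_self_eq_zero, mulVec_sub, sub_eq_zero] at hzero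

end KKT

theorem generalized_lasso_subgradient_DT_invariant_and_unique_full_row_rank
    (n p m : ℕ) (y : Fin n → ℝ) (X : Matrix (Fin n) (Fin p) ℝ)
    (D : Matrix (Fin m) (Fin p) ℝ) (lam : ℝ) (hlam : 0 < lam) :
    (∀ γ₁ γ₂ : Fin m → ℝ, IsOptSubgrad n p m y X D lam γ₁ →
      IsOptSubgrad n p m y X D lam γ₂ →
      D.transpose.mulVec γ₁ = D.transpose.mulVec γ₂) ∧
    (D.rank = m →
      ∀ γ₁ γ₂ : Fin m → ℝ, IsOptSubgrad n p m y X D lam γ₁ →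
        IsOptSubgrad n p m y X D lam γ₂ → γ₁ = γ₂) := by
  have hDT_eq : ∀ γ₁ γ₂ : Fin m → ℝ, IsOptSubgrad n p m y X D lam γ₁ →
      IsOptSubgrad n p m y X D lam γ₂ → Dᵀ *ᵥ γ₁ = Dᵀ *ᵥ γ₂ := by
    rintro γ₁ γ₂ ⟨β₁, -, hkkt₁, hsub₁⟩ ⟨β₂, -, hkkt₂, hsub₂⟩
    have hfit := mulVec_eq_of_kkt hlam.le hkkt₁ hkkt₂ hsub₁ hsub₂
    exact smul_right_injective _ hlam.ne' (hkkt₁.symm.trans (hfit ▸ hkkt₂))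
  refine ⟨hDT_eq, fun hrank γ₁ γ₂ h₁ h₂ => ?_⟩
  exact Matrix.mulVec_transpose_injective_of_rank_eq (by rw [hrank, Fintype.card_fin])
    (hDT_eq γ₁ γ₂ h₁ h₂)
end

section
/- Fix X ∈ ℝ^{n×p}, D ∈ ℝ^{m×p} and λ > 0. There is a set N ⊆ ℝⁿ of n-dimensional Lebesgue measure zero (depending on X, D, λ) such that for every y ∉ N: all boundary sets B associated with optimal subgradients in the generalized lasso problem give rise to the same subspace X·null(D_{−B}) of ℝⁿ, i.e., there is a single linear subspace L ⊆ ℝⁿ with L = X·null(D_{−B}) for every boundary set B of an optimal subgradient; moreover, for y ∉ N, L = X·null(D_{−A}) for every active set A = supp(Dβ̂) of a generalized lasso solution β̂. -/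
open Matrix

/-- The boundary set of a subgradient `γ`: coordinates achieving absolute value 1. -/
def boundarySet (m : ℕ) (γ : Fin m → ℝ) : Set (Fin m) := {i | |γ i| = 1}

/-- The null space of `D_{−B}`, i.e. `{β : (Dβ)ᵢ = 0 for all i ∉ B}`. -/
def nullDminus (m p : ℕ) (D : Matrix (Fin m) (Fin p) ℝ) (B : Set (Fin m)) :
    Set (Fin p → ℝ) :=
  {β | ∀ i ∉ B, D.mulVec β i = 0}

section Aux

variable {n p m : ℕ}

/-- Null space of `D_{-S}` as a submodule. -/
def VSsub (D : Matrix (Fin m) (Fin p) ℝ) (S : Set (Fin m)) : Submodule ℝ (Fin p → ℝ) where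
  carrier := {v | ∀ i ∉ S, D.mulVec v i = 0}
  add_mem' := by
    intro a b ha hb i hi
    simp [Matrix.mulVec_add, ha i hi, hb i hi]
  zero_mem' := by
    intro i _
    simp [Matrix.mulVec_zero]
  smul_mem' := by
    intro c a ha i hi
    simp [Matrix.mulVec_smul, ha i hi]

lemma mem_VSsub {D : Matrix (Fin m) (Fin p) ℝ} {S : Set (Fin m)} {v : Fin p → ℝ} :
    v ∈ VSsub D S ↔ ∀ i ∉ S, D.mulVec v i = 0 := Iff.rfl

/-- `X ⋅ null(D_{-S})` as a submodule. -/
def LBsub (X : Matrix (Fin n) (Fin p) ℝ) (D : Matrix (Fin m) (Fin p) ℝ) (S : Set (Fin m)) :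
    Submodule ℝ (Fin n → ℝ) := (VSsub D S).map X.mulVecLin

lemma image_nullDminus_eq (X : Matrix (Fin n) (Fin p) ℝ) (D : Matrix (Fin m) (Fin p) ℝ)
    (S : Set (Fin m)) :
    X.mulVec '' nullDminus m p D S = (LBsub X D S : Set (Fin n → ℝ)) := by
  ext x
  constructor
  · rintro ⟨v, hv, rfl⟩
    exact ⟨v, hv, rfl⟩
  · rintro ⟨v, hv, rfl⟩
    exact ⟨v, hv, rfl⟩

/-- The occurrence predicate: configuration `(S, ε)` occurs at `y` with fit `u`. -/
def OccP (y : Fin n → ℝ) (X : Matrix (Fin n) (Fin p) ℝ) (D : Matrix (Fin m) (Fin p) ℝ)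
    (lam : ℝ) (S : Set (Fin m)) (ε : Fin m → ℝ) (u : Fin n → ℝ) : Prop :=
  u ∈ LBsub X D S ∧
    ∀ v ∈ VSsub D S, X.mulVec v ⬝ᵥ (y - u) = lam * (D.mulVec v ⬝ᵥ ε)

/-- The "ambiguity" subspace associated to two index sets. -/
def ZSsub (X : Matrix (Fin n) (Fin p) ℝ) (D : Matrix (Fin m) (Fin p) ℝ)
    (S₁ S₂ : Set (Fin m)) : Submodule ℝ (Fin n → ℝ) where
  carrier := {z | ∃ w ∈ LBsub X D S₁ ⊓ LBsub X D S₂,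
    (∀ v ∈ VSsub D S₁, X.mulVec v ⬝ᵥ (z - w) = 0) ∧
    (∀ v ∈ VSsub D S₂, X.mulVec v ⬝ᵥ (z - w) = 0)}
  add_mem' := by
    rintro a b ⟨w₁, hw₁, h₁, h₁'⟩ ⟨w₂, hw₂, h₂, h₂'⟩
    refine ⟨w₁ + w₂, add_mem hw₁ hw₂, ?_, ?_⟩ <;>
      intro v hv <;>
      · have : a + b - (w₁ + w₂) = (a - w₁) + (b - w₂) := by abel
        rw [this, dotProduct_add]
        first
        | rw [h₁ v hv, h₂ v hv, add_zero]
        | rw [h₁' v hv, h₂' v hv, add_zero]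
  zero_mem' := by
    refine ⟨0, zero_mem _, ?_, ?_⟩ <;> intro v hv <;> simp
  smul_mem' := by
    rintro c a ⟨w, hw, h, h'⟩
    refine ⟨c • w, Submodule.smul_mem _ c hw, ?_, ?_⟩ <;>
      intro v hv <;>
      · rw [← smul_sub, dotProduct_smul]
        first
        | rw [h v hv, smul_zero]
        | rw [h' v hv, smul_zero]

lemma ZSsub_ne_top {X : Matrix (Fin n) (Fin p) ℝ} {D : Matrix (Fin m) (Fin p) ℝ}
    {S₁ S₂ : Set (Fin m)} (hL : LBsub X D S₁ ≠ LBsub X D S₂) :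
    ZSsub X D S₁ S₂ ≠ ⊤ := by
  intro htop
  apply hL
  apply le_antisymm
  · rintro x ⟨v₁, hv₁, rfl⟩
    have hx : X.mulVecLin v₁ ∈ ZSsub X D S₁ S₂ := by rw [htop]; trivial
    obtain ⟨w, hw, h1, -⟩ := hx
    obtain ⟨v₂, hv₂, rfl⟩ := hw.1
    have h := h1 (v₁ - v₂) (sub_mem hv₁ hv₂)
    have hsub : X.mulVec (v₁ - v₂) = X.mulVecLin v₁ - X.mulVecLin v₂ := by
      simp [Matrix.mulVec_sub, Matrix.mulVecLin_apply]
    rw [hsub] at h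
    have h0 : X.mulVecLin v₁ - X.mulVecLin v₂ = 0 := dotProduct_self_eq_zero.mp h
    have heq : X.mulVecLin v₁ = X.mulVecLin v₂ := sub_eq_zero.mp h0
    exact heq ▸ hw.2
  · rintro x ⟨v₁, hv₁, rfl⟩
    have hx : X.mulVecLin v₁ ∈ ZSsub X D S₁ S₂ := by rw [htop]; trivial
    obtain ⟨w, hw, -, h2⟩ := hx
    obtain ⟨v₂, hv₂, rfl⟩ := hw.2
    have h := h2 (v₁ - v₂) (sub_mem hv₁ hv₂)
    have hsub : X.mulVec (v₁ - v₂) = X.mulVecLin v₁ - X.mulVecLin v₂ := by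
      simp [Matrix.mulVec_sub, Matrix.mulVecLin_apply]
    rw [hsub] at h
    have h0 : X.mulVecLin v₁ - X.mulVecLin v₂ = 0 := dotProduct_self_eq_zero.mp h
    have heq : X.mulVecLin v₁ = X.mulVecLin v₂ := sub_eq_zero.mp h0
    exact heq ▸ hw.1

open MeasureTheory in
lemma piece_null (X : Matrix (Fin n) (Fin p) ℝ) (D : Matrix (Fin m) (Fin p) ℝ) (lam : ℝ)
    (S₁ S₂ : Set (Fin m)) (ε₁ ε₂ : Fin m → ℝ) :
    volume {y : Fin n → ℝ | LBsub X D S₁ ≠ LBsub X D S₂ ∧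
      ∃ u, OccP y X D lam S₁ ε₁ u ∧ OccP y X D lam S₂ ε₂ u} = 0 := by
  by_cases hL : LBsub X D S₁ = LBsub X D S₂
  · have hempty : {y : Fin n → ℝ | LBsub X D S₁ ≠ LBsub X D S₂ ∧
        ∃ u, OccP y X D lam S₁ ε₁ u ∧ OccP y X D lam S₂ ε₂ u} = ∅ := by
      ext y; simp [hL]
    rw [hempty]; exact measure_empty
  · by_cases hne : Set.Nonempty {y : Fin n → ℝ | LBsub X D S₁ ≠ LBsub X D S₂ ∧
        ∃ u, OccP y X D lam S₁ ε₁ u ∧ OccP y X D lam S₂ ε₂ u}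
    · obtain ⟨y₀, -, u₀, h01, h02⟩ := hne
      have hsub : {y : Fin n → ℝ | LBsub X D S₁ ≠ LBsub X D S₂ ∧
          ∃ u, OccP y X D lam S₁ ε₁ u ∧ OccP y X D lam S₂ ε₂ u} ⊆
          (fun y => y + (-y₀)) ⁻¹' (ZSsub X D S₁ S₂ : Set (Fin n → ℝ)) := by
        rintro y ⟨-, u, h1, h2⟩
        show y + -y₀ ∈ ZSsub X D S₁ S₂
        refine ⟨u - u₀, Submodule.mem_inf.mpr ⟨sub_mem h1.1 h01.1, sub_mem h2.1 h02.1⟩,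
          ?_, ?_⟩ <;> intro v hv
        · have harg : y + -y₀ - (u - u₀) = (y - u) - (y₀ - u₀) := by abel
          rw [harg, dotProduct_sub, h1.2 v hv, h01.2 v hv, sub_self]
        · have harg : y + -y₀ - (u - u₀) = (y - u) - (y₀ - u₀) := by abel
          rw [harg, dotProduct_sub, h2.2 v hv, h02.2 v hv, sub_self]
      refine measure_mono_null hsub ?_
      rw [measure_preimage_add_right]
      exact Measure.addHaar_submodule volume _ (ZSsub_ne_top hL)
    · rw [Set.not_nonempty_iff_eq_empty] at hne
      rw [hne]; exact measure_empty

lemma fit_unique {y : Fin n → ℝ} {X : Matrix (Fin n) (Fin p) ℝ}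
    {D : Matrix (Fin m) (Fin p) ℝ} {lam : ℝ} (hlam : 0 ≤ lam) {β₁ β₂ : Fin p → ℝ}
    (h1 : IsGLSol n p m y X D lam β₁) (h2 : IsGLSol n p m y X D lam β₂) :
    X.mulVec β₁ = X.mulVec β₂ := by
  set μ := (1/2 : ℝ) • (β₁ + β₂) with hμ
  have hXμ : ∀ i, X.mulVec μ i = (X.mulVec β₁ i + X.mulVec β₂ i) / 2 := by
    intro i
    simp only [hμ, Matrix.mulVec_smul, Matrix.mulVec_add, Pi.smul_apply, Pi.add_apply,
      smul_eq_mul]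
    ring
  have hDμ : ∀ i, D.mulVec μ i = (D.mulVec β₁ i + D.mulVec β₂ i) / 2 := by
    intro i
    simp only [hμ, Matrix.mulVec_smul, Matrix.mulVec_add, Pi.smul_apply, Pi.add_apply,
      smul_eq_mul]
    ring
  have hq : ∑ i, (y i - X.mulVec μ i) ^ 2 =
      (1/2) * ∑ i, (y i - X.mulVec β₁ i) ^ 2 + (1/2) * ∑ i, (y i - X.mulVec β₂ i) ^ 2
        - (1/4) * ∑ i, (X.mulVec β₁ i - X.mulVec β₂ i) ^ 2 := by
    rw [Finset.mul_sum, Finset.mul_sum, Finset.mul_sum, ← Finset.sum_add_distrib,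
      ← Finset.sum_sub_distrib]
    refine Finset.sum_congr rfl fun i _ => ?_
    rw [hXμ i]; ring
  have habs : ∑ i, |D.mulVec μ i| ≤
      (1/2) * ∑ i, |D.mulVec β₁ i| + (1/2) * ∑ i, |D.mulVec β₂ i| := by
    rw [Finset.mul_sum, Finset.mul_sum, ← Finset.sum_add_distrib]
    refine Finset.sum_le_sum fun i _ => ?_
    rw [hDμ i]
    have h1 := abs_add_le (D.mulVec β₁ i) (D.mulVec β₂ i)
    have h2 : |(D.mulVec β₁ i + D.mulVec β₂ i) / 2| = |D.mulVec β₁ i + D.mulVec β₂ i| / 2 := by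
      rw [abs_div]; norm_num
    linarith
  have key : glCrit n p m y X D lam μ ≤
      (1/2) * glCrit n p m y X D lam β₁ + (1/2) * glCrit n p m y X D lam β₂
        - (1/8) * ∑ i, (X.mulVec β₁ i - X.mulVec β₂ i) ^ 2 := by
    have hmul := mul_le_mul_of_nonneg_left habs hlam
    unfold glCrit
    nlinarith [hq]
  have g1μ : glCrit n p m y X D lam β₁ ≤ glCrit n p m y X D lam μ := h1 μ
  have g21 : glCrit n p m y X D lam β₂ ≤ glCrit n p m y X D lam β₁ := h2 β₁
  have g12 : glCrit n p m y X D lam β₁ ≤ glCrit n p m y X D lam β₂ := h1 β₂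
  have hQ0 : ∑ i, (X.mulVec β₁ i - X.mulVec β₂ i) ^ 2 = 0 := by
    have hnn : (0:ℝ) ≤ ∑ i, (X.mulVec β₁ i - X.mulVec β₂ i) ^ 2 :=
      Finset.sum_nonneg fun i _ => sq_nonneg _
    linarith
  funext i
  have := (Finset.sum_eq_zero_iff_of_nonneg fun i _ => sq_nonneg
    (X.mulVec β₁ i - X.mulVec β₂ i)).mp hQ0 i (Finset.mem_univ i)
  have := pow_eq_zero_iff (n := 2) (by norm_num) |>.mp this
  linarith [sub_eq_zero.mp this]

lemma sol_perturb {y : Fin n → ℝ} {X : Matrix (Fin n) (Fin p) ℝ}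
    {D : Matrix (Fin m) (Fin p) ℝ} {lam : ℝ} {β : Fin p → ℝ}
    (hβ : IsGLSol n p m y X D lam β) (v : Fin p → ℝ)
    (hv : ∀ i, D.mulVec β i = 0 → D.mulVec v i = 0) :
    X.mulVec v ⬝ᵥ (y - X.mulVec β) =
      lam * ∑ i, D.mulVec v i * Real.sign (D.mulVec β i) := by
  classical
  set a : Fin m → ℝ := D.mulVec β with ha
  set c : Fin m → ℝ := D.mulVec v with hc
  set w : Fin n → ℝ := X.mulVec v with hw
  set Q : ℝ := ∑ i, w i ^ 2 with hQdef
  set K : ℝ := ∑ i, w i * (y i - X.mulVec β i) with hKdef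
  set S : ℝ := ∑ i, c i * Real.sign (a i) with hSdef
  -- step 1 : the δ giving local linearity of the absolute values
  obtain ⟨δ, hδpos, hδ⟩ : ∃ δ : ℝ, 0 < δ ∧ ∀ (i : Fin m) (t : ℝ), |t| < δ →
      |a i + t * c i| = |a i| + t * c i * Real.sign (a i) := by
    set F : Fin m → ℝ := fun i => if a i = 0 then 1 else |a i| / (|c i| + 1) with hF
    have hFpos : ∀ i, 0 < F i := by
      intro i
      by_cases h : a i = 0
      · simp [hF, h]
      · simp only [hF, h, if_false]
        exact div_pos (abs_pos.mpr h) (by positivity)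
    obtain ⟨δ, hδpos, hδle⟩ : ∃ δ : ℝ, 0 < δ ∧ ∀ i, δ ≤ F i := by
      rcases isEmpty_or_nonempty (Fin m) with hE | hNE
      · exact ⟨1, one_pos, fun i => (hE.elim i)⟩
      · refine ⟨Finset.univ.inf' Finset.univ_nonempty F, ?_,
          fun i => Finset.inf'_le F (Finset.mem_univ i)⟩
        exact (Finset.lt_inf'_iff _).mpr fun i _ => hFpos i
    refine ⟨δ, hδpos, fun i t ht => ?_⟩
    by_cases h : a i = 0
    · have hc0 : c i = 0 := hv i h
      simp [h, hc0]
    · have hFi : F i = |a i| / (|c i| + 1) := by simp [hF, h]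
      have h2 : (0:ℝ) < |c i| + 1 := by positivity
      have h1 : |t| < |a i| / (|c i| + 1) := lt_of_lt_of_le ht (hFi ▸ hδle i)
      have hlt : |t| * (|c i| + 1) < |a i| := (lt_div_iff₀ h2).mp h1
      have htc : |t * c i| < |a i| := by
        rw [abs_mul]
        nlinarith [abs_nonneg (c i), abs_nonneg t]
      have htc1 : t * c i ≤ |t * c i| := le_abs_self _
      have htc2 : -|t * c i| ≤ t * c i := neg_abs_le _
      rcases lt_or_gt_of_ne h with hneg | hpos
      · have hsign : Real.sign (a i) = -1 := Real.sign_of_neg hneg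
        have habs : |a i| = -(a i) := abs_of_neg hneg
        have hsum : a i + t * c i < 0 := by rw [habs] at htc; linarith
        rw [abs_of_neg hsum, hsign, habs]; ring
      · have hsign : Real.sign (a i) = 1 := Real.sign_of_pos hpos
        have habs : |a i| = a i := abs_of_pos hpos
        have hsum : 0 < a i + t * c i := by rw [habs] at htc; linarith
        rw [abs_of_pos hsum, hsign, habs]; ring
  -- step 2 : expansion of the criterion near β
  have hexp : ∀ t : ℝ, |t| < δ → glCrit n p m y X D lam (β + t • v) =
      glCrit n p m y X D lam β + t * (lam * S - K) + t ^ 2 * (Q / 2) := by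
    intro t ht
    have hX : ∀ i, X.mulVec (β + t • v) i = X.mulVec β i + t * w i := by
      intro i
      simp [Matrix.mulVec_add, Matrix.mulVec_smul, hw]
    have hD : ∀ i, D.mulVec (β + t • v) i = a i + t * c i := by
      intro i
      simp [Matrix.mulVec_add, Matrix.mulVec_smul, ha, hc]
    have hqs : ∑ i, (y i - X.mulVec (β + t • v) i) ^ 2 =
        ∑ i, (y i - X.mulVec β i) ^ 2 - 2 * t * K + t ^ 2 * Q := by
      rw [hKdef, hQdef, Finset.mul_sum, Finset.mul_sum, ← Finset.sum_sub_distrib,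
        ← Finset.sum_add_distrib]
      refine Finset.sum_congr rfl fun i _ => ?_
      rw [hX i]; ring
    have habs2 : ∑ i, |D.mulVec (β + t • v) i| = ∑ i, |a i| + t * S := by
      rw [hSdef, Finset.mul_sum, ← Finset.sum_add_distrib]
      refine Finset.sum_congr rfl fun i _ => ?_
      rw [hD i, hδ i t ht]; ring
    unfold glCrit
    rw [hqs, habs2, ← ha]
    ring
  -- step 3 : the linear coefficient vanishes
  have hgoalK : X.mulVec v ⬝ᵥ (y - X.mulVec β) = K := by
    rw [hKdef]
    simp [dotProduct, hw]
  rw [hgoalK]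
  by_contra hne
  have hE : lam * S - K ≠ 0 := sub_ne_zero.mpr fun h => hne (h.symm)
  set E : ℝ := lam * S - K with hEdef
  have hQ0 : (0:ℝ) ≤ Q := Finset.sum_nonneg fun i _ => sq_nonneg _
  have hE2 : (0:ℝ) < E ^ 2 := by rcases hE.lt_or_gt with h | h <;> nlinarith
  set η : ℝ := min (δ / (2 * (|E| + 1))) (1 / (Q + 1)) with hηdef
  have hηpos : 0 < η := lt_min (by positivity) (by positivity)
  have hη1 : η ≤ 1 / (Q + 1) := min_le_right _ _
  have hη2 : η ≤ δ / (2 * (|E| + 1)) := min_le_left _ _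
  have hηQ : η * (Q + 1) ≤ 1 := by
    rw [le_div_iff₀ (by positivity : (0:ℝ) < Q + 1)] at hη1
    exact hη1
  set t : ℝ := -E * η with htdef
  have htδ : |t| < δ := by
    have h1 : |t| = |E| * η := by
      rw [htdef, abs_mul, abs_neg, abs_of_pos hηpos]
    have h2 : |E| * η ≤ |E| * (δ / (2 * (|E| + 1))) :=
      mul_le_mul_of_nonneg_left hη2 (abs_nonneg E)
    have h3 : |E| * (δ / (2 * (|E| + 1))) < δ := by
      rw [div_eq_mul_inv]
      have hpos : (0:ℝ) < 2 * (|E| + 1) := by positivity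
      rw [mul_comm δ, ← mul_assoc]
      have : |E| * (2 * (|E| + 1))⁻¹ < 1 := by
        rw [mul_inv_lt_iff₀ hpos]
        nlinarith [abs_nonneg E]
      nlinarith
    linarith [h1 ▸ lt_of_le_of_lt h2 h3]
  have hmin := hβ (β + t • v)
  rw [hexp t htδ] at hmin
  have hineq : 0 ≤ t * E + t ^ 2 * (Q / 2) := by rw [hEdef]; linarith
  have hval : t * E + t ^ 2 * (Q / 2) = E ^ 2 * η * (η * Q / 2 - 1) := by
    rw [htdef]; ring
  rw [hval] at hineq
  have hP : 0 < E ^ 2 * η := mul_pos hE2 hηpos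
  have hneg : η * Q / 2 - 1 < 0 := by nlinarith
  have := mul_neg_of_pos_of_neg hP hneg
  linarith

lemma abs_sign_of_ne_zero {x : ℝ} (hx : x ≠ 0) : |Real.sign x| = 1 := by
  rcases hx.lt_or_gt with h | h
  · rw [Real.sign_of_neg h]; norm_num
  · rw [Real.sign_of_pos h]; norm_num

lemma sol_occ {y : Fin n → ℝ} {X : Matrix (Fin n) (Fin p) ℝ}
    {D : Matrix (Fin m) (Fin p) ℝ} {lam : ℝ} {β : Fin p → ℝ}
    (hβ : IsGLSol n p m y X D lam β) :
    OccP y X D lam {i | D.mulVec β i ≠ 0} (fun i => Real.sign (D.mulVec β i))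
      (X.mulVec β) := by
  constructor
  · exact ⟨β, fun i hi => not_not.mp hi, rfl⟩
  · intro v hv
    have hv' : ∀ i, D.mulVec β i = 0 → D.mulVec v i = 0 := fun i h =>
      hv i (by simp [h])
    rw [sol_perturb hβ v hv']
    rfl

lemma subgrad_occ {y : Fin n → ℝ} {X : Matrix (Fin n) (Fin p) ℝ}
    {D : Matrix (Fin m) (Fin p) ℝ} {lam : ℝ} {γ : Fin m → ℝ} {β : Fin p → ℝ}
    (hkkt : X.transpose.mulVec (y - X.mulVec β) = lam • D.transpose.mulVec γ)
    (hsign : ∀ i : Fin m,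
      (D.mulVec β i ≠ 0 → γ i = Real.sign (D.mulVec β i)) ∧
      (D.mulVec β i = 0 → γ i ∈ Set.Icc (-1 : ℝ) 1)) :
    OccP y X D lam (boundarySet m γ) (fun i => if |γ i| = 1 then γ i else 0)
      (X.mulVec β) := by
  constructor
  · refine ⟨β, fun i hi => ?_, rfl⟩
    by_contra h
    exact hi (by
      show |γ i| = 1
      rw [(hsign i).1 h]
      exact abs_sign_of_ne_zero h)
  · intro v hv
    have hdot := congrArg (fun z => v ⬝ᵥ z) hkkt
    simp only [dotProduct_mulVec, vecMul_transpose] at hdot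
    rw [dotProduct_smul, smul_eq_mul, dotProduct_mulVec, vecMul_transpose] at hdot
    rw [hdot]
    congr 1
    refine Finset.sum_congr rfl fun i _ => ?_
    by_cases h : |γ i| = 1
    · simp [h]
    · have h0 : D.mulVec v i = 0 := hv i h
      simp [h, h0]

lemma sign_encode {k : ℕ} (d : Fin k → ℝ) :
    (fun i => (((if 0 < d i then (1:ℤ) else if d i < 0 then -1 else 0) : ℤ) : ℝ)) =
      fun i => Real.sign (d i) := by
  funext i
  rcases lt_trichotomy (d i) 0 with h | h | h
  · rw [Real.sign_of_neg h]
    simp [h, not_lt_of_gt h]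
  · simp [h, Real.sign_zero]
  · rw [Real.sign_of_pos h]
    simp [h]

end Aux

open MeasureTheory in
theorem generalized_lasso_invariance_of_X_null_D_minus_B
    (n p m : ℕ) (X : Matrix (Fin n) (Fin p) ℝ)
    (D : Matrix (Fin m) (Fin p) ℝ) (lam : ℝ) (hlam : 0 < lam) :
    ∃ N : Set (Fin n → ℝ), volume N = 0 ∧
      ∀ y : Fin n → ℝ, y ∉ N →
        ∃ L : Submodule ℝ (Fin n → ℝ),
          (∀ γ : Fin m → ℝ, IsOptSubgrad n p m y X D lam γ →
            X.mulVec '' nullDminus m p D (boundarySet m γ) = (L : Set (Fin n → ℝ))) ∧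
          (∀ β : Fin p → ℝ, IsGLSol n p m y X D lam β →
            X.mulVec '' nullDminus m p D {i | D.mulVec β i ≠ 0} = (L : Set (Fin n → ℝ))) := by
  classical
  refine ⟨⋃ c : (Finset (Fin m) × (Fin m → ℤ)) × (Finset (Fin m) × (Fin m → ℤ)),
    {y : Fin n → ℝ | LBsub X D ↑c.1.1 ≠ LBsub X D ↑c.2.1 ∧
      ∃ u, OccP y X D lam ↑c.1.1 (fun i => ((c.1.2 i : ℤ) : ℝ)) u ∧
           OccP y X D lam ↑c.2.1 (fun i => ((c.2.2 i : ℤ) : ℝ)) u}, ?_, ?_⟩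
  · exact measure_iUnion_null fun c => piece_null X D lam _ _ _ _
  · intro y hy
    by_cases hsol : ∃ β, IsGLSol n p m y X D lam β
    swap
    · refine ⟨⊥, fun γ hγ => ?_, fun β hβ => ?_⟩
      · obtain ⟨β, hβ, -, -⟩ := hγ
        exact absurd ⟨β, hβ⟩ hsol
      · exact absurd ⟨β, hβ⟩ hsol
    obtain ⟨β₀, hβ₀⟩ := hsol
    have hocc₀ : OccP y X D lam {i | D.mulVec β₀ i ≠ 0}
        (fun i => Real.sign (D.mulVec β₀ i)) (X.mulVec β₀) := sol_occ hβ₀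
    set σ₀ : Fin m → ℤ :=
      fun i => if 0 < D.mulVec β₀ i then 1 else if D.mulVec β₀ i < 0 then -1 else 0 with hσ₀def
    have hσ₀ : (fun i => ((σ₀ i : ℤ) : ℝ)) = fun i => Real.sign (D.mulVec β₀ i) :=
      sign_encode _
    have main : ∀ (S : Set (Fin m)) (ε : Fin m → ℝ) (σ : Fin m → ℤ),
        ((fun i => ((σ i : ℤ) : ℝ)) = ε) → ∀ β : Fin p → ℝ, IsGLSol n p m y X D lam β →
        OccP y X D lam S ε (X.mulVec β) →
        LBsub X D S = LBsub X D {i | D.mulVec β₀ i ≠ 0} := by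
      intro S ε σ hσ β hβ hocc
      by_contra hne
      apply hy
      have hfit : X.mulVec β = X.mulVec β₀ := fit_unique hlam.le hβ hβ₀
      refine Set.mem_iUnion.mpr ⟨(((Set.toFinite S).toFinset, σ),
        ((Set.toFinite {i | D.mulVec β₀ i ≠ 0}).toFinset, σ₀)), ?_⟩
      show LBsub X D _ ≠ LBsub X D _ ∧ _
      rw [Set.Finite.coe_toFinset, Set.Finite.coe_toFinset, hσ, hσ₀]
      exact ⟨hne, X.mulVec β, hocc, hfit ▸ hocc₀⟩
    refine ⟨LBsub X D {i | D.mulVec β₀ i ≠ 0}, ?_, ?_⟩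
    · intro γ hγ
      obtain ⟨β, hβ, hkkt, hsign⟩ := hγ
      set ε : Fin m → ℝ := fun i => if |γ i| = 1 then γ i else 0 with hεdef
      set σ : Fin m → ℤ :=
        fun i => if 0 < γ i ∧ |γ i| = 1 then 1 else
          if γ i < 0 ∧ |γ i| = 1 then -1 else 0 with hσdef
      have hσ : (fun i => ((σ i : ℤ) : ℝ)) = ε := by
        funext i
        by_cases h : |γ i| = 1
        · rcases (abs_eq (by norm_num : (0:ℝ) ≤ 1)).mp h with h1 | h1 <;>
            simp [hσdef, hεdef, h, h1]
        · simp [hσdef, hεdef, h]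
      have hL := main (boundarySet m γ) ε σ hσ β hβ (subgrad_occ hkkt hsign)
      rw [image_nullDminus_eq, hL]
    · intro β hβ
      have hL := main {i | D.mulVec β i ≠ 0} (fun i => Real.sign (D.mulVec β i))
        (fun i => if 0 < D.mulVec β i then 1 else if D.mulVec β i < 0 then -1 else 0)
        (sign_encode _) β hβ (sol_occ hβ)
      rw [image_nullDminus_eq, hL]
end

section
/- Fix y ∈ ℝⁿ, X ∈ ℝ^{n×p}, D ∈ ℝ^{m×p} and λ > 0. Suppose that (i) for every boundary set B associated with an optimal subgradient of the generalized lasso problem, null(X) ∩ null(D_{−B}) = {0}, and (ii) the subspace null(D_{−B}) is the same for all boundary sets B associated with optimal subgradients. Then the generalized lasso problem has a unique solution. -/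
open Matrix

/-!
Minimizers exist because the criterion factors through `β ↦ (Xβ, Dβ)` and is coercive as a
function of that pair. Strict convexity of the squared loss forces all minimizers to have the same
fit `Xβ`, hence the same penalty `‖Dβ‖₁`. Fix a minimizer `β̂`; comparing one-sided directional
derivatives and separating `Xᵀ(y − Xβ̂)` from the compact convex set `λ Dᵀ ∂‖·‖₁(Dβ̂)` produces an
optimal subgradient `γ` for it. For every minimizer `β`,
`λ γ ⬝ D(β − β̂) = (y − Xβ̂) ⬝ X(β − β̂) = 0`, so `γ ⬝ Dβ = ‖Dβ‖₁`; since `|γᵢ| ≤ 1` this forces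
`(Dβ)ᵢ = 0` off the boundary set `B` of `γ`. Hence `β − β̂ ∈ null(X) ∩ null(D_{−B}) = {0}`.
-/

open Filter Topology

namespace Real

theorem sign_mul_self_eq_abs (x : ℝ) : Real.sign x * x = |x| := by
  rcases lt_trichotomy x 0 with h | rfl | h
  · rw [sign_of_neg h, abs_of_neg h]; ring
  · simp
  · rw [sign_of_pos h, abs_of_pos h]; ring

theorem sign_mem_Icc (x : ℝ) : Real.sign x ∈ Set.Icc (-1 : ℝ) 1 := by
  rcases sign_apply_eq x with h | h | h <;> rw [h] <;> norm_num

end Real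

/-- The subdifferential of `|·|` at `x`. -/
noncomputable def absSubdiff (x : ℝ) : Set ℝ :=
  if x = 0 then Set.Icc (-1) 1 else {Real.sign x}

theorem convex_absSubdiff (x : ℝ) : Convex ℝ (absSubdiff x) := by
  unfold absSubdiff; split_ifs
  exacts [convex_Icc _ _, convex_singleton _]

theorem isCompact_absSubdiff (x : ℝ) : IsCompact (absSubdiff x) := by
  unfold absSubdiff; split_ifs
  exacts [isCompact_Icc, isCompact_singleton]

theorem abs_le_one_of_mem_absSubdiff {x s : ℝ} (hs : s ∈ absSubdiff x) : |s| ≤ 1 := by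
  unfold absSubdiff at hs; split_ifs at hs
  · exact abs_le.2 hs
  · rw [Set.mem_singleton_iff.1 hs]; exact abs_le.2 (Real.sign_mem_Icc x)

theorem mul_eq_abs_of_mem_absSubdiff {x s : ℝ} (hs : s ∈ absSubdiff x) : s * x = |x| := by
  unfold absSubdiff at hs; split_ifs at hs with hx
  · simp [hx]
  · rw [Set.mem_singleton_iff.1 hs, Real.sign_mul_self_eq_abs]

theorem dotProduct_eq_sum_abs_of_mem_pi_absSubdiff {ι : Type*} [Fintype ι] {γ a : ι → ℝ}
    (hγ : γ ∈ Set.univ.pi fun i => absSubdiff (a i)) : γ ⬝ᵥ a = ∑ i, |a i| :=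
  Finset.sum_congr rfl fun i _ => mul_eq_abs_of_mem_absSubdiff (hγ i trivial)

theorem abs_eq_one_of_dotProduct_eq_sum_abs {ι : Type*} [Fintype ι] {γ v : ι → ℝ}
    (hγ : ∀ i, |γ i| ≤ 1) (h : γ ⬝ᵥ v = ∑ i, |v i|) {i : ι} (hv : v i ≠ 0) : |γ i| = 1 := by
  have hle : ∀ j ∈ Finset.univ, γ j * v j ≤ |v j| := fun j _ =>
    (le_abs_self _).trans (by rw [abs_mul]; exact mul_le_of_le_one_left (abs_nonneg _) (hγ j))
  have hi : γ i * v i = |v i| := (Finset.sum_eq_sum_iff_of_le hle).1 h i (Finset.mem_univ i)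
  refine le_antisymm (hγ i) (le_of_mul_le_mul_right ?_ (abs_pos.2 hv))
  rw [one_mul, ← abs_mul, ← hi]
  exact le_abs_self _

/-- The sign of `a + t * d` for all small `t > 0`; it maximizes `s ↦ s * d` over
`absSubdiff a`. -/
noncomputable def dirSign (a d : ℝ) : ℝ :=
  if a = 0 then Real.sign d else Real.sign a

theorem dirSign_mem_absSubdiff (a d : ℝ) : dirSign a d ∈ absSubdiff a := by
  unfold dirSign absSubdiff; split_ifs
  exacts [Real.sign_mem_Icc d, rfl]

theorem eventually_abs_add_mul_eq (a d : ℝ) :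
    ∀ᶠ t in 𝓝[>] (0 : ℝ), |a + t * d| = |a| + t * (dirSign a d * d) := by
  have hlim : Tendsto (fun t => a + t * d) (𝓝[>] 0) (𝓝 a) :=
    tendsto_nhdsWithin_of_tendsto_nhds
      ((by fun_prop : Continuous fun t : ℝ => a + t * d).tendsto' 0 a (by simp))
  rcases lt_trichotomy a 0 with ha | rfl | ha
  · filter_upwards [hlim.eventually (gt_mem_nhds ha)] with t ht
    rw [abs_of_neg ht, abs_of_neg ha, dirSign, if_neg ha.ne, Real.sign_of_neg ha]; ring
  · filter_upwards [self_mem_nhdsWithin] with t (ht : 0 < t)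
    rw [dirSign, if_pos rfl, Real.sign_mul_self_eq_abs, zero_add, abs_zero, zero_add, abs_mul,
      abs_of_pos ht]
  · filter_upwards [hlim.eventually (lt_mem_nhds ha)] with t ht
    rw [abs_of_pos ht, abs_of_pos ha, dirSign, if_neg ha.ne', Real.sign_of_pos ha]; ring

theorem nonneg_of_eventually_nonneg_mul_add_sq_mul {A C : ℝ}
    (h : ∀ᶠ t in 𝓝[>] (0 : ℝ), 0 ≤ t * A + t ^ 2 * C) : 0 ≤ A := by
  have hlim : Tendsto (fun t => A + t * C) (𝓝[>] 0) (𝓝 A) :=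
    tendsto_nhdsWithin_of_tendsto_nhds
      ((by fun_prop : Continuous fun t : ℝ => A + t * C).tendsto' 0 A (by simp))
  refine ge_of_tendsto hlim ?_
  filter_upwards [h, self_mem_nhdsWithin] with t h (ht : 0 < t)
  exact nonneg_of_mul_nonneg_right (by linarith) ht

theorem Matrix.transpose_mulVec_dotProduct {ι κ : Type*} [Fintype ι] [Fintype κ]
    (A : Matrix ι κ ℝ) (u : ι → ℝ) (v : κ → ℝ) : (Aᵀ *ᵥ u) ⬝ᵥ v = u ⬝ᵥ A *ᵥ v := by
  rw [dotProduct_comm, dotProduct_transpose_mulVec]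

theorem mem_of_forall_exists_dotProduct_le {ι : Type*} [Fintype ι] {K : Set (ι → ℝ)}
    (hconv : Convex ℝ K) (hclosed : IsClosed K) {x : ι → ℝ}
    (h : ∀ η, ∃ k ∈ K, x ⬝ᵥ η ≤ k ⬝ᵥ η) : x ∈ K := by
  classical
  by_contra hx
  obtain ⟨f, u, hfK, hfx⟩ := geometric_hahn_banach_closed_point hconv hclosed hx
  have hf : ∀ v, f v = v ⬝ᵥ fun i => f fun j => if i = j then 1 else 0 := fun v =>
    LinearMap.pi_apply_eq_sum_univ f.toLinearMap v
  obtain ⟨k, hk, hle⟩ := h fun i => f fun j => if i = j then 1 else 0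
  have hfk := hfK k hk
  rw [hf] at hfk hfx
  linarith

theorem exists_forall_le_comp_of_isBounded_sublevel {E F : Type*} [AddCommGroup E]
    [Module ℝ E] [NormedAddCommGroup F] [NormedSpace ℝ F] [FiniteDimensional ℝ F]
    (T : E →ₗ[ℝ] F) {g : F → ℝ} (hg : Continuous g)
    (hbdd : Bornology.IsBounded {v | g v ≤ g 0}) : ∃ x, ∀ x', g (T x) ≤ g (T x') := by
  set S := (LinearMap.range T : Set F) ∩ {v | g v ≤ g 0}
  have hS : IsCompact S := Metric.isCompact_of_isClosed_isBounded
    ((LinearMap.range T).closed_of_finiteDimensional.inter (isClosed_le hg continuous_const))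
    (hbdd.subset Set.inter_subset_right)
  have h0 : (0 : F) ∈ S := ⟨(LinearMap.range T).zero_mem, le_refl (g 0)⟩
  obtain ⟨_, ⟨⟨x, rfl⟩, hx0⟩, hmin⟩ := hS.exists_isMinOn ⟨0, h0⟩ hg.continuousOn
  refine ⟨x, fun x' => ?_⟩
  by_cases hx' : g (T x') ≤ g 0
  · exact hmin ⟨⟨x', rfl⟩, hx'⟩
  · exact hx0.trans (le_of_not_ge hx')

section GeneralizedLasso

variable {n p m : ℕ} {y : Fin n → ℝ} {X : Matrix (Fin n) (Fin p) ℝ}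
  {D : Matrix (Fin m) (Fin p) ℝ} {lam : ℝ}

/-- `glCrit β` is definitionally `glLoss y lam (X *ᵥ β, D *ᵥ β)`; unlike `glCrit`, `glLoss` is
coercive. -/
noncomputable def glLoss (y : Fin n → ℝ) (lam : ℝ) (w : (Fin n → ℝ) × (Fin m → ℝ)) : ℝ :=
  (1 / 2) * ∑ i, (y i - w.1 i) ^ 2 + lam * ∑ i, |w.2 i|

theorem continuous_glLoss : Continuous (glLoss (m := m) y lam) := by
  unfold glLoss; fun_prop

theorem isBounded_glLoss_sublevel (hlam : 0 < lam) (c : ℝ) :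
    Bornology.IsBounded {w | glLoss (m := m) y lam w ≤ c} := by
  refine ((Bornology.IsBounded.pi fun i => Metric.isBounded_closedBall (x := y i) (r := √(2 * c))
    ).prod (Bornology.IsBounded.pi fun _ => Metric.isBounded_closedBall (x := 0) (r := c / lam))
    ).subset ?_
  rintro ⟨u, v⟩ hw
  replace hw : (1 / 2) * ∑ i, (y i - u i) ^ 2 + lam * ∑ i, |v i| ≤ c := hw
  have hsq_nonneg : 0 ≤ ∑ i, (y i - u i) ^ 2 := by positivity
  have hpen_nonneg : 0 ≤ lam * ∑ i, |v i| := by positivity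
  have hsq : ∑ i, (y i - u i) ^ 2 ≤ 2 * c := by linarith
  have habs : ∑ i, |v i| ≤ c / lam := by rw [le_div_iff₀ hlam]; linarith
  refine ⟨fun i _ => ?_, fun i _ => ?_⟩
  · rw [Metric.mem_closedBall, Real.dist_eq, abs_sub_comm]
    exact Real.abs_le_sqrt ((Finset.single_le_sum (fun j _ => sq_nonneg (y j - u j))
      (Finset.mem_univ i)).trans hsq)
  · rw [Metric.mem_closedBall, dist_zero_right, Real.norm_eq_abs]
    exact (Finset.single_le_sum (fun j _ => abs_nonneg (v j)) (Finset.mem_univ i)).trans habs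

theorem exists_isGLSol (hlam : 0 < lam) : ∃ β, IsGLSol n p m y X D lam β :=
  exists_forall_le_comp_of_isBounded_sublevel ((Matrix.mulVecLin X).prod (Matrix.mulVecLin D))
    continuous_glLoss (isBounded_glLoss_sublevel hlam _)

theorem glCrit_add_smul_eventually_eq (β η : Fin p → ℝ) :
    ∀ᶠ t in 𝓝[>] (0 : ℝ), glCrit n p m y X D lam (β + t • η) = glCrit n p m y X D lam β
      + t * (lam * ((fun i => dirSign ((D *ᵥ β) i) ((D *ᵥ η) i)) ⬝ᵥ D *ᵥ η)
        - (y - X *ᵥ β) ⬝ᵥ X *ᵥ η)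
      + t ^ 2 * ((1 / 2) * ∑ i, ((X *ᵥ η) i) ^ 2) := by
  filter_upwards [eventually_all.2 fun i => eventually_abs_add_mul_eq ((D *ᵥ β) i) ((D *ᵥ η) i)]
    with t ht
  simp only [glCrit, mulVec_add, mulVec_smul, Pi.add_apply, Pi.smul_apply, smul_eq_mul, ht,
    dotProduct, Pi.sub_apply]
  have hsq : ∑ i, (y i - ((X *ᵥ β) i + t * (X *ᵥ η) i)) ^ 2 = ∑ i, (y i - (X *ᵥ β) i) ^ 2
      - 2 * t * ∑ i, (y i - (X *ᵥ β) i) * (X *ᵥ η) i + t ^ 2 * ∑ i, (X *ᵥ η) i ^ 2 := by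
    simp only [Finset.mul_sum, ← Finset.sum_sub_distrib, ← Finset.sum_add_distrib]
    exact Finset.sum_congr rfl fun i _ => by ring
  rw [hsq, Finset.sum_add_distrib, ← Finset.mul_sum]
  ring

theorem IsGLSol.dotProduct_le {β : Fin p → ℝ} (hβ : IsGLSol n p m y X D lam β) (η : Fin p → ℝ) :
    (y - X *ᵥ β) ⬝ᵥ X *ᵥ η ≤ lam * ((fun i => dirSign ((D *ᵥ β) i) ((D *ᵥ η) i)) ⬝ᵥ D *ᵥ η) := by
  refine sub_nonneg.1 (nonneg_of_eventually_nonneg_mul_add_sq_mul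
    (C := (1 / 2) * ∑ i, ((X *ᵥ η) i) ^ 2) ?_)
  filter_upwards [glCrit_add_smul_eventually_eq (y := y) (X := X) (D := D) (lam := lam) β η]
    with t ht
  linarith [hβ (β + t • η)]

theorem IsGLSol.exists_kkt {β : Fin p → ℝ} (hβ : IsGLSol n p m y X D lam β) :
    ∃ γ ∈ Set.univ.pi fun i => absSubdiff ((D *ᵥ β) i),
      Xᵀ *ᵥ (y - X *ᵥ β) = lam • Dᵀ *ᵥ γ := by
  set Γ := Set.univ.pi fun i => absSubdiff ((D *ᵥ β) i)
  let L : (Fin m → ℝ) →ₗ[ℝ] (Fin p → ℝ) := lam • (Dᵀ).mulVecLin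
  have hΓ : IsCompact Γ := isCompact_univ_pi fun i => isCompact_absSubdiff _
  have hmem : Xᵀ *ᵥ (y - X *ᵥ β) ∈ L '' Γ := by
    refine mem_of_forall_exists_dotProduct_le
      ((convex_pi fun i _ => convex_absSubdiff _).linear_image L)
      (hΓ.image L.continuous_of_finiteDimensional).isClosed fun η =>
        ⟨L _, Set.mem_image_of_mem L fun i _ => dirSign_mem_absSubdiff _ ((D *ᵥ η) i), ?_⟩
    simpa only [L, LinearMap.smul_apply, mulVecLin_apply, smul_dotProduct, smul_eq_mul,
      Matrix.transpose_mulVec_dotProduct] using hβ.dotProduct_le η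
  obtain ⟨γ, hγ, h⟩ := hmem
  exact ⟨γ, hγ, h.symm⟩

theorem isOptSubgrad_of_kkt {β : Fin p → ℝ} {γ : Fin m → ℝ} (hβ : IsGLSol n p m y X D lam β)
    (hγ : γ ∈ Set.univ.pi fun i => absSubdiff ((D *ᵥ β) i))
    (hkkt : Xᵀ *ᵥ (y - X *ᵥ β) = lam • Dᵀ *ᵥ γ) : IsOptSubgrad n p m y X D lam γ := by
  refine ⟨β, hβ, hkkt, fun i => ⟨fun h => ?_, fun h => ?_⟩⟩ <;>
    simpa [absSubdiff, h] using hγ i trivial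

theorem glCrit_midpoint_add_le (hlam : 0 ≤ lam) (β₁ β₂ : Fin p → ℝ) :
    glCrit n p m y X D lam ((1 / 2 : ℝ) • (β₁ + β₂))
        + (1 / 8) * ∑ i, ((X *ᵥ β₁) i - (X *ᵥ β₂) i) ^ 2
      ≤ (glCrit n p m y X D lam β₁ + glCrit n p m y X D lam β₂) / 2 := by
  have hsq : ∑ i, (y i - (1 / 2) * ((X *ᵥ β₁) i + (X *ᵥ β₂) i)) ^ 2
      + (1 / 4) * ∑ i, ((X *ᵥ β₁) i - (X *ᵥ β₂) i) ^ 2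
      = (∑ i, (y i - (X *ᵥ β₁) i) ^ 2 + ∑ i, (y i - (X *ᵥ β₂) i) ^ 2) / 2 := by
    simp only [Finset.mul_sum, Finset.sum_div, ← Finset.sum_add_distrib]
    refine Finset.sum_congr rfl fun i _ => ?_
    ring
  have habs : ∑ i, |(1 / 2) * ((D *ᵥ β₁) i + (D *ᵥ β₂) i)|
      ≤ (∑ i, |(D *ᵥ β₁) i| + ∑ i, |(D *ᵥ β₂) i|) / 2 := by
    simp only [Finset.sum_div, ← Finset.sum_add_distrib]
    refine Finset.sum_le_sum fun i _ => ?_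
    rw [abs_mul, abs_of_pos (by norm_num : (0 : ℝ) < 1 / 2)]
    linarith [abs_add_le ((D *ᵥ β₁) i) ((D *ᵥ β₂) i)]
  simp only [glCrit, mulVec_smul, mulVec_add, Pi.smul_apply, Pi.add_apply, smul_eq_mul]
  linarith [mul_le_mul_of_nonneg_left habs hlam]

theorem IsGLSol.mulVec_eq (hlam : 0 ≤ lam) {β₁ β₂ : Fin p → ℝ}
    (h₁ : IsGLSol n p m y X D lam β₁) (h₂ : IsGLSol n p m y X D lam β₂) : X *ᵥ β₁ = X *ᵥ β₂ := by
  have hmid := glCrit_midpoint_add_le (y := y) (X := X) (D := D) hlam β₁ β₂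
  have hsum : ∑ i, ((X *ᵥ β₁) i - (X *ᵥ β₂) i) ^ 2 = 0 :=
    le_antisymm (by linarith [h₁ β₂, h₂ β₁, h₁ ((1 / 2 : ℝ) • (β₁ + β₂))]) (by positivity)
  funext i
  have hzero := (Fintype.sum_eq_zero_iff_of_nonneg fun j =>
    sq_nonneg ((X *ᵥ β₁) j - (X *ᵥ β₂) j)).1 hsum
  exact sub_eq_zero.1 (pow_eq_zero_iff two_ne_zero |>.1 (congrFun hzero i))

theorem IsGLSol.sum_abs_eq (hlam : 0 < lam) {β₁ β₂ : Fin p → ℝ}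
    (h₁ : IsGLSol n p m y X D lam β₁) (h₂ : IsGLSol n p m y X D lam β₂) :
    ∑ i, |(D *ᵥ β₁) i| = ∑ i, |(D *ᵥ β₂) i| := by
  have hcrit := le_antisymm (h₁ β₂) (h₂ β₁)
  simp only [glCrit, h₁.mulVec_eq hlam.le h₂] at hcrit
  exact mul_left_cancel₀ hlam.ne' (by linarith)

theorem dotProduct_mulVec_eq_of_kkt (hlam : lam ≠ 0) {β β' : Fin p → ℝ} {γ : Fin m → ℝ}
    (hkkt : Xᵀ *ᵥ (y - X *ᵥ β) = lam • Dᵀ *ᵥ γ) (hfit : X *ᵥ β' = X *ᵥ β) :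
    γ ⬝ᵥ D *ᵥ β' = γ ⬝ᵥ D *ᵥ β := by
  have h : lam * (γ ⬝ᵥ D *ᵥ (β' - β)) = 0 := calc
    lam * (γ ⬝ᵥ D *ᵥ (β' - β)) = (lam • Dᵀ *ᵥ γ) ⬝ᵥ (β' - β) := by
      rw [smul_dotProduct, Matrix.transpose_mulVec_dotProduct, smul_eq_mul]
    _ = (y - X *ᵥ β) ⬝ᵥ X *ᵥ (β' - β) := by rw [← hkkt, Matrix.transpose_mulVec_dotProduct]
    _ = 0 := by rw [mulVec_sub, hfit, sub_self, dotProduct_zero]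
  rw [mulVec_sub, dotProduct_sub, mul_eq_zero, sub_eq_zero] at h
  exact h.resolve_left hlam

theorem IsGLSol.mem_nullDminus_boundarySet (hlam : 0 < lam) {β β' : Fin p → ℝ} {γ : Fin m → ℝ}
    (hβ : IsGLSol n p m y X D lam β) (hγ : γ ∈ Set.univ.pi fun i => absSubdiff ((D *ᵥ β) i))
    (hkkt : Xᵀ *ᵥ (y - X *ᵥ β) = lam • Dᵀ *ᵥ γ) (hβ' : IsGLSol n p m y X D lam β') :
    β' ∈ nullDminus m p D (boundarySet m γ) := by
  intro i hi
  by_contra hne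
  refine hi (abs_eq_one_of_dotProduct_eq_sum_abs
    (fun j => abs_le_one_of_mem_absSubdiff (hγ j trivial)) ?_ hne)
  calc γ ⬝ᵥ D *ᵥ β' = γ ⬝ᵥ D *ᵥ β :=
        dotProduct_mulVec_eq_of_kkt hlam.ne' hkkt (hβ'.mulVec_eq hlam.le hβ)
    _ = ∑ j, |(D *ᵥ β) j| := dotProduct_eq_sum_abs_of_mem_pi_absSubdiff hγ
    _ = ∑ j, |(D *ᵥ β') j| := hβ.sum_abs_eq hlam hβ'

end GeneralizedLasso

theorem generalized_lasso_unique_under_rank_and_invariance_conditions_general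
    (n p m : ℕ) (y : Fin n → ℝ) (X : Matrix (Fin n) (Fin p) ℝ)
    (D : Matrix (Fin m) (Fin p) ℝ) (lam : ℝ) (hlam : 0 < lam)
    (h₁ : ∀ γ : Fin m → ℝ, IsOptSubgrad n p m y X D lam γ →
      ∀ β : Fin p → ℝ, X.mulVec β = 0 →
        β ∈ nullDminus m p D (boundarySet m γ) → β = 0) :
    ∃! β : Fin p → ℝ, IsGLSol n p m y X D lam β := by
  obtain ⟨β, hβ⟩ := exists_isGLSol (y := y) (X := X) (D := D) hlam
  obtain ⟨γ, hγ, hkkt⟩ := hβ.exists_kkt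
  refine ⟨β, hβ, fun β' hβ' => sub_eq_zero.1 (h₁ γ (isOptSubgrad_of_kkt hβ hγ hkkt) _ ?_ ?_)⟩
  · rw [mulVec_sub, hβ'.mulVec_eq hlam.le hβ, sub_self]
  · intro i hi
    rw [mulVec_sub, Pi.sub_apply, hβ.mem_nullDminus_boundarySet hlam hγ hkkt hβ' i hi,
      hβ.mem_nullDminus_boundarySet hlam hγ hkkt hβ i hi, sub_self]

theorem generalized_lasso_unique_under_rank_and_invariance_conditions
    (n p m : ℕ) (y : Fin n → ℝ) (X : Matrix (Fin n) (Fin p) ℝ)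
    (D : Matrix (Fin m) (Fin p) ℝ) (lam : ℝ) (hlam : 0 < lam)
    (h₁ : ∀ γ : Fin m → ℝ, IsOptSubgrad n p m y X D lam γ →
      ∀ β : Fin p → ℝ, X.mulVec β = 0 →
        β ∈ nullDminus m p D (boundarySet m γ) → β = 0)
    (h₂ : ∀ γ₁ γ₂ : Fin m → ℝ, IsOptSubgrad n p m y X D lam γ₁ →
      IsOptSubgrad n p m y X D lam γ₂ →
      nullDminus m p D (boundarySet m γ₁) = nullDminus m p D (boundarySet m γ₂)) :
    ∃! β : Fin p → ℝ, IsGLSol n p m y X D lam β :=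
  generalized_lasso_unique_under_rank_and_invariance_conditions_general n p m y X D lam hlam h₁
end

section
/- Fix D ∈ ℝ^{m×p}. If either p ≤ n, or p > n and the dimension of the null space of D is at most n (nullity(D) ≤ n), then the set of matrices X ∈ ℝ^{n×p} for which null(X) ∩ null(D) ≠ {0} has (np)-dimensional Lebesgue measure zero. Consequently, if the entries of X are drawn from any probability distribution absolutely continuous with respect to (np)-dimensional Lebesgue measure, then null(X) ∩ null(D) = {0} almost surely. -/
/-!
Let `K = null(D)` and `k = dim K ≤ n`. Choose `B ∈ ℝ^{p×k}` with range `K` and a left inverse `C`.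
If `X` kills a nonzero `β = Bγ ∈ K`, the top `k × k` block of `XB` kills `γ`, so its determinant,
a polynomial in the entries of `X`, vanishes at `X`. This polynomial is nonzero: it takes the value
`det (CB) = 1` at any `X` whose first `k` rows are `C`. The zero set of a nonzero real polynomial
is Lebesgue-null, by induction on the number of variables and Fubini: off the null zero set of
the leading coefficient in the first variable, every slice is a finite set of roots.
-/

open Matrix MeasureTheory

namespace MvPolynomial

theorem ae_eval_ne_zero {N : ℕ} {P : MvPolynomial (Fin N) ℝ} (hP : P ≠ 0) :
    ∀ᵐ x : Fin N → ℝ, eval x P ≠ 0 := by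
  induction N with
  | zero =>
    obtain ⟨r, rfl⟩ := C_surjective (Fin 0) P
    exact ae_of_all _ fun x => by simpa using hP
  | succ N ih =>
    set q := finSuccEquiv ℝ N P
    have hq : q ≠ 0 := (map_ne_zero_iff _ (AlgEquiv.injective _)).mpr hP
    have hslice : ∀ᵐ s : Fin N → ℝ, ∀ᵐ y : ℝ, eval (Fin.cons y s) P ≠ 0 := by
      filter_upwards [ih (Polynomial.leadingCoeff_ne_zero.mpr hq)] with s hs
      have hqs : q.map (eval s) ≠ 0 := fun h => hs <| by
        simpa [Polynomial.coeff_map] using congrArg (Polynomial.coeff · q.natDegree) h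
      filter_upwards [(Polynomial.finite_setOfPred_isRoot hqs).countable.ae_notMem volume]
        with y hy
      rwa [eval_eq_eval_mv_eval']
    have hcont : Continuous fun z : ℝ × (Fin N → ℝ) => eval (Fin.cons z.1 z.2) P :=
      (continuous_eval P).comp (by fun_prop)
    have hmeas := (isOpen_ne_fun hcont (continuous_const (y := 0))).measurableSet
    have hmeas_swap : MeasurableSet
        {z : (Fin N → ℝ) × ℝ | eval (Fin.cons z.2 z.1 : Fin (N + 1) → ℝ) P ≠ 0} :=
      (isOpen_ne_fun (hcont.comp continuous_swap) (continuous_const (y := 0))).measurableSet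
    have hprod : ∀ᵐ z ∂(volume : Measure ℝ).prod volume,
        eval (Fin.cons z.1 z.2 : Fin (N + 1) → ℝ) P ≠ 0 :=
      (Measure.ae_prod_iff_ae_ae hmeas).mpr ((Measure.ae_ae_comm hmeas_swap).mp hslice)
    rw [← (volume_preserving_piFinSuccAbove (fun _ => ℝ) 0).symm.map_eq,
      MeasurableEquiv.measurableEmbedding _ |>.ae_map_iff]
    filter_upwards [hprod] with z hz
    simpa [MeasurableEquiv.piFinSuccAbove, Fin.consEquiv] using hz

theorem ae_eval_linearEquiv_ne_zero {σ E : Type*} [Fintype σ] [NormedAddCommGroup E]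
    [NormedSpace ℝ E] [FiniteDimensional ℝ E] [MeasurableSpace E] [BorelSpace E]
    (μ : Measure E) [μ.IsAddHaarMeasure] (L : E ≃L[ℝ] (σ → ℝ)) {P : MvPolynomial σ ℝ}
    (hP : P ≠ 0) : ∀ᵐ x ∂μ, eval (L x) P ≠ 0 := by
  let e := Fintype.equivFin σ
  let L' : E ≃L[ℝ] (Fin (Fintype.card σ) → ℝ) :=
    L.trans (LinearEquiv.funCongrLeft ℝ ℝ e.symm).toContinuousLinearEquiv
  have hrename : rename e P ≠ 0 :=
    (rename_injective e e.injective).ne_iff' (map_zero _) |>.mpr hP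
  have hmap : ∀ᵐ x ∂volume.map L'.symm, eval (L' x) (rename e P) ≠ 0 :=
    L'.symm.toHomeomorph.measurableEmbedding.ae_map_iff.mpr (by
      simpa using ae_eval_ne_zero hrename)
  filter_upwards [(Measure.absolutelyContinuous_isAddHaarMeasure μ _).ae_le hmap] with x hx
  simpa [eval_rename, L', Function.comp_def] using hx

end MvPolynomial

namespace Matrix

variable {R : Type*} [CommRing R] {n p k : ℕ}

noncomputable def topMinorPoly (B : Matrix (Fin p) (Fin k) R) (hk : k ≤ n) :
    MvPolynomial (Fin n × Fin p) R :=
  -- without `σ` fixed, `*` elaborates as `CStarMatrix` multiplication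
  ((mvPolynomialX (Fin n) (Fin p) R).submatrix (Fin.castLE hk) id *
    B.map (MvPolynomial.C (σ := Fin n × Fin p))).det

theorem eval_topMinorPoly (B : Matrix (Fin p) (Fin k) R) (hk : k ≤ n) (X : Fin n → Fin p → R) :
    MvPolynomial.eval (Function.uncurry X) (B.topMinorPoly hk) =
      ((of X).submatrix (Fin.castLE hk) id * B).det := by
  refine (RingHom.map_det _ _).trans (congrArg det ?_)
  rw [RingHom.mapMatrix_apply, Matrix.map_mul, ← submatrix_map]
  congr 2
  · exact mvPolynomialX_map_eval₂ _ (of X)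
  · ext; simp

theorem topMinorPoly_ne_zero [Nontrivial R] {B : Matrix (Fin p) (Fin k) R}
    {C : Matrix (Fin k) (Fin p) R} (hCB : C * B = 1) (hk : k ≤ n) : B.topMinorPoly hk ≠ 0 := by
  let X : Fin n → Fin p → R := fun i j => if h : (i : ℕ) < k then C ⟨i, h⟩ j else 0
  have hX : (of X).submatrix (Fin.castLE hk) id = C := by ext i j; simp [X]
  intro h
  have := B.eval_topMinorPoly hk X
  rw [h, hX, hCB, det_one, map_zero] at this
  exact zero_ne_one this

theorem eval_topMinorPoly_eq_zero [IsDomain R] (B : Matrix (Fin p) (Fin k) R) (hk : k ≤ n)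
    {X : Fin n → Fin p → R} {γ : Fin k → R} (hγ : γ ≠ 0) (hX : of X *ᵥ (B *ᵥ γ) = 0) :
    MvPolynomial.eval (Function.uncurry X) (B.topMinorPoly hk) = 0 := by
  rw [eval_topMinorPoly, ← exists_mulVec_eq_zero_iff]
  refine ⟨γ, hγ, ?_⟩
  rw [← mulVec_mulVec]
  ext i
  exact congrFun hX (Fin.castLE hk i)

end Matrix

namespace Submodule

variable {R : Type*} [Field R] {p : ℕ}

theorem exists_range_mulVecLin_eq_and_mul_eq_one (K : Submodule R (Fin p → R)) :
    ∃ (B : Matrix (Fin p) (Fin (Module.finrank R K)) R)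
      (C : Matrix (Fin (Module.finrank R K)) (Fin p) R),
      LinearMap.range B.mulVecLin = K ∧ C * B = 1 := by
  let f := K.subtype ∘ₗ (Module.finBasis R K).equivFun.symm.toLinearMap
  obtain ⟨g, hg⟩ := f.exists_leftInverse_of_injective <| LinearMap.ker_eq_bot.mpr <|
    K.injective_subtype.comp (Module.finBasis R K).equivFun.symm.injective
  refine ⟨LinearMap.toMatrix' f, LinearMap.toMatrix' g, ?_, ?_⟩
  · rw [← Matrix.toLin'_apply', Matrix.toLin'_toMatrix',
      LinearMap.range_comp_of_range_eq_top _ (LinearEquiv.range _), range_subtype]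
  · rw [← LinearMap.toMatrix'_comp, hg, LinearMap.toMatrix'_id]

theorem exists_mvPolynomial_ne_zero_eval_eq_zero {n : ℕ} (K : Submodule R (Fin p → R))
    (hK : Module.finrank R K ≤ n) :
    ∃ P : MvPolynomial (Fin n × Fin p) R, P ≠ 0 ∧ ∀ (X : Fin n → Fin p → R), ∀ β ∈ K,
      β ≠ 0 → of X *ᵥ β = 0 → MvPolynomial.eval (Function.uncurry X) P = 0 := by
  obtain ⟨B, C, hB, hCB⟩ := K.exists_range_mulVecLin_eq_and_mul_eq_one
  refine ⟨B.topMinorPoly hK, topMinorPoly_ne_zero hCB hK, fun X β hβK hβ hXβ => ?_⟩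
  obtain ⟨γ, rfl⟩ : ∃ γ, B *ᵥ γ = β := by simpa [← hB] using hβK
  exact B.eval_topMinorPoly_eq_zero hK (by rintro rfl; simp at hβ) hXβ

end Submodule

theorem continuous_X_null_intersection_trivial_almost_surely
    (n p m : ℕ) (D : Matrix (Fin m) (Fin p) ℝ)
    (hdim : p ≤ n ∨ (n < p ∧ Module.finrank ℝ (LinearMap.ker D.mulVecLin) ≤ n)) :
    volume {X : Fin n → Fin p → ℝ |
      ∃ β : Fin p → ℝ, β ≠ 0 ∧ (Matrix.of X).mulVec β = 0 ∧ D.mulVec β = 0} = 0 ∧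
    ∀ μ : Measure (Fin n → Fin p → ℝ), μ ≪ volume →
      μ {X : Fin n → Fin p → ℝ |
        ∃ β : Fin p → ℝ, β ≠ 0 ∧ (Matrix.of X).mulVec β = 0 ∧ D.mulVec β = 0} = 0 := by
  set K := LinearMap.ker D.mulVecLin
  have hK : Module.finrank ℝ K ≤ n :=
    hdim.elim (fun h => K.finrank_le.trans (by simpa using h)) And.right
  obtain ⟨P, hP, hPK⟩ := K.exists_mvPolynomial_ne_zero_eval_eq_zero hK
  have : (volume : Measure (Fin n → Fin p → ℝ)).IsAddHaarMeasure := Measure.pi.isAddHaarMeasure _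
  have hP_ae := MvPolynomial.ae_eval_linearEquiv_ne_zero volume
    (LinearEquiv.curry ℝ ℝ (Fin n) (Fin p)).symm.toContinuousLinearEquiv hP
  have hnull : volume {X : Fin n → Fin p → ℝ |
      ∃ β : Fin p → ℝ, β ≠ 0 ∧ (Matrix.of X).mulVec β = 0 ∧ D.mulVec β = 0} = 0 := by
    refine measure_mono_null (fun X ⟨β, hβ, hXβ, hDβ⟩ => ?_) (ae_iff.mp hP_ae)
    simpa using hPK X β hDβ hβ hXβ
  exact ⟨hnull, fun μ hμ => hμ hnull⟩
end

section
/- Fix X ∈ ℝ^{n×p}, D ∈ ℝ^{m×p}, λ > 0, and y ∈ {0,1}ⁿ. If null(D) ⊆ null(X), then the logistic generalized lasso problem, minimize over β ∈ ℝᵖ of −yᵀXβ + Σ_{i=1}^n log(1 + e^{(Xβ)_i}) + λ‖Dβ‖₁, attains its infimum, i.e., a solution exists. In particular, when D = I (so that null(D) = {0} ⊆ null(X) automatically), lasso-penalized logistic regression always has a solution. -/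
open Matrix

/-- The logistic generalized lasso criterion
`−yᵀXβ + Σᵢ log(1 + exp((Xβ)ᵢ)) + λ‖Dβ‖₁`. -/
noncomputable def logisticGLCrit (n p m : ℕ) (y : Fin n → ℝ)
    (X : Matrix (Fin n) (Fin p) ℝ) (D : Matrix (Fin m) (Fin p) ℝ) (lam : ℝ)
    (β : Fin p → ℝ) : ℝ :=
  -(∑ i, y i * X.mulVec β i) + ∑ i, Real.log (1 + Real.exp (X.mulVec β i)) +
    lam * ∑ i, |D.mulVec β i|

lemma logisticGLCrit_lower (n p m : ℕ) (y : Fin n → ℝ)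
    (X : Matrix (Fin n) (Fin p) ℝ) (D : Matrix (Fin m) (Fin p) ℝ) (lam : ℝ)
    (hy : ∀ i, y i = 0 ∨ y i = 1) (β : Fin p → ℝ) :
    lam * ∑ i, |D.mulVec β i| ≤ logisticGLCrit n p m y X D lam β := by
  have h : ∑ i, y i * X.mulVec β i ≤ ∑ i, Real.log (1 + Real.exp (X.mulVec β i)) := by
    apply Finset.sum_le_sum
    intro i _
    rcases hy i with h0 | h1
    · rw [h0, zero_mul]
      apply Real.log_nonneg
      have := Real.exp_pos (X.mulVec β i); linarith
    · rw [h1, one_mul]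
      calc X.mulVec β i = Real.log (Real.exp (X.mulVec β i)) := (Real.log_exp _).symm
        _ ≤ Real.log (1 + Real.exp (X.mulVec β i)) := by
            apply Real.log_le_log (Real.exp_pos _); linarith
  unfold logisticGLCrit
  linarith

lemma logisticGLCrit_continuous (n p m : ℕ) (y : Fin n → ℝ)
    (X : Matrix (Fin n) (Fin p) ℝ) (D : Matrix (Fin m) (Fin p) ℝ) (lam : ℝ) :
    Continuous (logisticGLCrit n p m y X D lam) := by
  have hmv : ∀ (q : ℕ) (A : Matrix (Fin q) (Fin p) ℝ) (i : Fin q),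
      Continuous fun β : Fin p → ℝ => A.mulVec β i := by
    intro q A i
    simp only [Matrix.mulVec, dotProduct]
    exact continuous_finset_sum _ fun j _ => continuous_const.mul (continuous_apply j)
  unfold logisticGLCrit
  refine Continuous.add (Continuous.add ?_ ?_) ?_
  · exact (continuous_finset_sum _ fun i _ => continuous_const.mul (hmv n X i)).neg
  · refine continuous_finset_sum _ fun i _ => Continuous.log ?_ ?_
    · exact continuous_const.add (Real.continuous_exp.comp (hmv n X i))
    · intro β
      have := Real.exp_pos (X.mulVec β i); positivity
  · exact continuous_const.mul (continuous_finset_sum _ fun i _ => (hmv m D i).abs)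

lemma norm_le_sum_abs (m : ℕ) (v : Fin m → ℝ) : ‖v‖ ≤ ∑ i, |v i| := by
  have h0 : (0 : ℝ) ≤ ∑ i, |v i| := Finset.sum_nonneg fun i _ => abs_nonneg _
  refine pi_norm_le_iff_of_nonneg h0 |>.2 fun i => ?_
  rw [Real.norm_eq_abs]
  exact Finset.single_le_sum (fun j _ => abs_nonneg (v j)) (Finset.mem_univ i)

theorem logistic_generalized_lasso_solution_exists_of_null_subset
    (n p m : ℕ) (X : Matrix (Fin n) (Fin p) ℝ) (D : Matrix (Fin m) (Fin p) ℝ)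
    (lam : ℝ) (hlam : 0 < lam) (y : Fin n → ℝ) (hy : ∀ i, y i = 0 ∨ y i = 1)
    (hnull : ∀ β : Fin p → ℝ, D.mulVec β = 0 → X.mulVec β = 0) :
    ∃ β₀ : Fin p → ℝ, ∀ β : Fin p → ℝ,
      logisticGLCrit n p m y X D lam β₀ ≤ logisticGLCrit n p m y X D lam β := by
  set f := logisticGLCrit n p m y X D lam with hf
  set L : (Fin p → ℝ) →ₗ[ℝ] (Fin m → ℝ) := D.mulVecLin with hL
  set K : Submodule ℝ (Fin p → ℝ) := LinearMap.ker L with hK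
  obtain ⟨W, hW⟩ := Submodule.exists_isCompl K
  -- L restricted to W is injective
  set Lres : W →ₗ[ℝ] (Fin m → ℝ) := L.comp W.subtype with hLres
  have hker : LinearMap.ker Lres = ⊥ := by
    rw [LinearMap.ker_eq_bot]
    intro a b hab
    have ha : (a : Fin p → ℝ) - (b : Fin p → ℝ) ∈ K := by
      simp only [hK, LinearMap.mem_ker, map_sub]
      simp only [hLres, LinearMap.comp_apply, Submodule.subtype_apply] at hab
      rw [hab, sub_self]
    have hw : (a : Fin p → ℝ) - (b : Fin p → ℝ) ∈ W := sub_mem a.2 b.2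
    have : (a : Fin p → ℝ) - (b : Fin p → ℝ) = 0 := by
      have := hW.inf_eq_bot
      have hmem : (a : Fin p → ℝ) - b ∈ K ⊓ W := ⟨ha, hw⟩
      rwa [this, Submodule.mem_bot] at hmem
    exact Subtype.ext (sub_eq_zero.mp this)
  obtain ⟨c, hc, hanti⟩ := Lres.exists_antilipschitzWith hker
  -- coercive lower bound on W
  have hbound : ∀ w : W, lam * ((c : ℝ)⁻¹ * ‖w‖) ≤ f (w : Fin p → ℝ) := by
    intro w
    have h1 : ‖w‖ ≤ (c : ℝ) * ‖Lres w‖ := by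
      have := hanti.le_mul_dist w 0
      simpa [dist_zero_right, map_zero] using this
    have h2 : ‖Lres w‖ ≤ ∑ i, |D.mulVec (w : Fin p → ℝ) i| := by
      have : Lres w = D.mulVec (w : Fin p → ℝ) := rfl
      rw [this]
      exact norm_le_sum_abs m _
    have hcpos : (0 : ℝ) < c := hc
    have h3 : (c : ℝ)⁻¹ * ‖w‖ ≤ ∑ i, |D.mulVec (w : Fin p → ℝ) i| := by
      rw [inv_mul_le_iff₀ hcpos]
      calc ‖w‖ ≤ (c : ℝ) * ‖Lres w‖ := h1
        _ ≤ (c : ℝ) * ∑ i, |D.mulVec (w : Fin p → ℝ) i| := by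
            exact mul_le_mul_of_nonneg_left h2 (le_of_lt hcpos)
    calc lam * ((c : ℝ)⁻¹ * ‖w‖) ≤ lam * ∑ i, |D.mulVec (w : Fin p → ℝ) i| :=
          mul_le_mul_of_nonneg_left h3 (le_of_lt hlam)
      _ ≤ f (w : Fin p → ℝ) := logisticGLCrit_lower n p m y X D lam hy _
  -- existence of minimizer on W
  have hcont : Continuous fun w : W => f (w : Fin p → ℝ) :=
    (logisticGLCrit_continuous n p m y X D lam).comp continuous_subtype_val
  have hcoer : Filter.Tendsto (fun w : W => f (w : Fin p → ℝ))
      (Filter.cocompact W) Filter.atTop := by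
    have hcpos : (0 : ℝ) < c := hc
    have h1 : Filter.Tendsto (fun w : W => lam * ((c : ℝ)⁻¹ * ‖w‖))
        (Filter.cocompact W) Filter.atTop := by
      have := tendsto_norm_cocompact_atTop (E := W)
      have h2 := this.const_mul_atTop (show (0:ℝ) < lam * (c : ℝ)⁻¹ by positivity)
      refine h2.congr fun w => by ring
    exact Filter.tendsto_atTop_mono hbound h1
  have : Nonempty W := ⟨0⟩
  obtain ⟨w₀, hw₀⟩ := hcont.exists_forall_le hcoer
  refine ⟨(w₀ : Fin p → ℝ), fun β => ?_⟩
  -- decompose β = k + w with k ∈ K, w ∈ W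
  have hβ : β ∈ K ⊔ W := by rw [hW.sup_eq_top]; trivial
  obtain ⟨k, hk, w, hw, hkw⟩ := Submodule.mem_sup.mp hβ
  have hXk : X.mulVec k = 0 := hnull k (by simpa [hK, hL] using hk)
  have hDk : D.mulVec k = 0 := by simpa [hK, hL] using hk
  have hfeq : f β = f w := by
    rw [hf]
    unfold logisticGLCrit
    have hX : X.mulVec β = X.mulVec w := by
      rw [← hkw, Matrix.mulVec_add, hXk, zero_add]
    have hD : D.mulVec β = D.mulVec w := by
      rw [← hkw, Matrix.mulVec_add, hDk, zero_add]
    rw [hX, hD]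
  rw [hfeq]
  exact hw₀ ⟨w, hw⟩
end
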